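/- (Convergence of the average response to the constrained equilibrium.) If 2γ‖A‖² ≤ α, then for every k ≥ 1 the average response ȳ^k = (1/k)∑_{s=0}^{k-1} y^s satisfies ‖ȳ^k − y⋆‖² ≤ (2/(α·γ·k))·( D₁ + D₂ ), where D₁ = (1/2)·‖τ⁰‖² + 2γ·E^k, D₂ = ‖τ⋆‖² + ‖τ⋆‖·‖τ⁰ − τ⋆‖ + 2·‖τ⋆‖·√(γ·E^k), and E^k = ∑_{s=0}^{k-1} ε^s. -/

import Mathlib

/-!
Along the toll iteration, `‖τˢ - τ⋆‖²` decreases up to the errors. Since `τ⋆ ≥ 0` and the slack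
`b - A y⋆ ≥ 0` is orthogonal to `τ⋆`, the positive part gives
`‖τˢ⁺¹ - τ⋆‖² ≤ ‖τˢ - τ⋆ + γ A (yˢ - y⋆)‖²`. Expanding, the cross term is
`L(yˢ, τˢ) - L(y⋆, τˢ)` minus the gap `L(yˢ, τ⋆) - L(y⋆, τ⋆)`; strong convexity of `L(·, τˢ)` at its
`εˢ`-minimiser `yˢ` pays for the quadratic term when `2γ‖A‖² ≤ α`, leaving
`‖τˢ⁺¹ - τ⋆‖² + 2γ · gapₛ ≤ ‖τˢ - τ⋆‖² + 4γεˢ`. Telescoping bounds the summed gaps, and by Jensen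
and strong convexity of `L(·, τ⋆)` at its minimiser `y⋆`, `α/2 ‖ȳᵏ - y⋆‖²` is at most the average
gap.
-/

open scoped RealInnerProductSpace

section StrongConvexity

variable {E : Type*} [NormedAddCommGroup E] [NormedSpace ℝ E] {s : Set E} {m ε : ℝ}
  {f g : E → ℝ} {y z : E}

lemma StrongConvexOn.add_convexOn (hf : StrongConvexOn s m f) (hg : ConvexOn ℝ s g) :
    StrongConvexOn s m (f + g) := by
  have h := hf.add hg.uniformConvexOn_zero
  rwa [add_zero] at h

lemma StrongConvexOn.sq_norm_sub_le_of_forall_le_add (hf : StrongConvexOn s m f) (hy : y ∈ s)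
    (hz : z ∈ s) (hε : ∀ x ∈ s, f y ≤ f x + ε) : m / 4 * ‖y - z‖ ^ 2 ≤ f z - f y + 2 * ε := by
  have hhalf : (0 : ℝ) ≤ 1 / 2 := by norm_num
  have hmid := hε _ (hf.1 hy hz hhalf hhalf (by norm_num))
  have hconv := hf.2 hy hz hhalf hhalf (by norm_num)
  simp only [smul_eq_mul] at hconv
  linarith

open Filter Topology in
lemma StrongConvexOn.sq_norm_sub_le_of_isMinOn (hf : StrongConvexOn s m f) (hz : z ∈ s)
    (hmin : IsMinOn f s z) (hy : y ∈ s) : m / 2 * ‖y - z‖ ^ 2 ≤ f y - f z := by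
  have hlim : Tendsto (fun t : ℝ => (1 - t) * (m / 2 * ‖y - z‖ ^ 2)) (𝓝[>] 0)
      (𝓝 (m / 2 * ‖y - z‖ ^ 2)) := by
    have : Continuous fun t : ℝ => (1 - t) * (m / 2 * ‖y - z‖ ^ 2) := by fun_prop
    simpa using (this.tendsto 0).mono_left nhdsWithin_le_nhds
  refine le_of_tendsto hlim ?_
  filter_upwards [Ioo_mem_nhdsGT one_pos] with t ⟨ht0, ht1⟩
  have hconv := hf.2 hy hz ht0.le (sub_nonneg.2 ht1.le) (add_sub_cancel t 1)
  have hle : f z ≤ f (t • y + (1 - t) • z) :=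
    hmin (hf.1 hy hz ht0.le (sub_nonneg.2 ht1.le) (add_sub_cancel t 1))
  simp only [smul_eq_mul] at hconv
  have : t * ((1 - t) * (m / 2 * ‖y - z‖ ^ 2)) ≤ t * (f y - f z) := by linarith
  exact le_of_mul_le_mul_left this ht0

lemma StrongConvexOn.sq_norm_average_sub_le {ι : Type*} {t : Finset ι} {p : ι → E}
    (hf : StrongConvexOn s m f) (hm : 0 ≤ m) (hz : z ∈ s) (hmin : IsMinOn f s z)
    (hp : ∀ i ∈ t, p i ∈ s) (ht : t.Nonempty) :
    m / 2 * ‖(t.card : ℝ)⁻¹ • ∑ i ∈ t, p i - z‖ ^ 2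
      ≤ (t.card : ℝ)⁻¹ * ∑ i ∈ t, (f (p i) - f z) := by
  have hw₀ : ∀ i ∈ t, (0 : ℝ) ≤ (t.card : ℝ)⁻¹ := fun _ _ => by positivity
  have hw₁ : ∑ _i ∈ t, (t.card : ℝ)⁻¹ = 1 := by
    rw [Finset.sum_const, nsmul_eq_mul, mul_inv_cancel₀ (by exact_mod_cast ht.card_ne_zero)]
  have havg : (t.card : ℝ)⁻¹ • ∑ i ∈ t, p i = ∑ i ∈ t, (t.card : ℝ)⁻¹ • p i := Finset.smul_sum
  have hjensen := (hf.convexOn fun r => by positivity).map_sum_le hw₀ hw₁ hp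
  have hmem := hf.1.sum_mem hw₀ hw₁ hp
  rw [← havg] at hjensen hmem
  calc m / 2 * ‖(t.card : ℝ)⁻¹ • ∑ i ∈ t, p i - z‖ ^ 2
      ≤ f ((t.card : ℝ)⁻¹ • ∑ i ∈ t, p i) - f z := hf.sq_norm_sub_le_of_isMinOn hz hmin hmem
    _ ≤ ∑ i ∈ t, (t.card : ℝ)⁻¹ • f (p i) - f z := by linarith
    _ = (t.card : ℝ)⁻¹ * ∑ i ∈ t, (f (p i) - f z) := by
      rw [Finset.mul_sum]
      simp only [smul_eq_mul, mul_sub, Finset.sum_sub_distrib, ← Finset.sum_mul, hw₁, one_mul]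

end StrongConvexity

lemma sq_max_zero_sub_le {v u w : ℝ} (hu : 0 ≤ u) (hw : 0 ≤ w) :
    (max v 0 - u) ^ 2 ≤ (v + w - u) ^ 2 + 2 * u * w := by
  rcases le_total 0 v with hv | hv
  · rw [max_eq_left hv]
    nlinarith [mul_nonneg hw hv]
  · rw [max_eq_right hv]
    nlinarith [sq_nonneg (v + w), mul_nonneg hu (neg_nonneg.2 hv)]

lemma EuclideanSpace.sq_norm_sub_le_of_forall_eq_max_zero {κ : Type*} [Fintype κ]
    {p v w u : EuclideanSpace ℝ κ} (hp : ∀ i, p i = max (v i) 0) (hu : ∀ i, 0 ≤ u i)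
    (hw : ∀ i, 0 ≤ w i) :
    ‖p - u‖ ^ 2 ≤ ‖v + w - u‖ ^ 2 + 2 * ⟪u, w⟫ := by
  simp only [EuclideanSpace.norm_sq_eq, PiLp.inner_apply, RCLike.inner_apply, conj_trivial,
    Real.norm_eq_abs, sq_abs, Finset.mul_sum, ← Finset.sum_add_distrib]
  refine Finset.sum_le_sum fun i _ => ?_
  simpa [hp, mul_assoc, mul_comm (w i)] using sq_max_zero_sub_le (v := v i) (hu i) (hw i)

lemma sq_norm_sub_add_sq_norm_le {F : Type*} [NormedAddCommGroup F] [InnerProductSpace ℝ F]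
    (x y : F) : ‖x - y‖ ^ 2 + ‖y‖ ^ 2 ≤ ‖x‖ ^ 2 + 2 * ‖y‖ * ‖x - y‖ := by
  have hx : ‖x‖ ^ 2 = ‖x - y‖ ^ 2 + 2 * ⟪x - y, y⟫ + ‖y‖ ^ 2 := by
    rw [← norm_add_sq_real, sub_add_cancel]
  have hcs := neg_le_of_abs_le (abs_real_inner_le_norm (x - y) y)
  nlinarith

lemma sum_range_le_of_add_succ_le {a c e : ℕ → ℝ} (h : ∀ s, c s + a (s + 1) ≤ a s + e s)
    (ha : ∀ n, 0 ≤ a n) (k : ℕ) : ∑ s ∈ Finset.range k, c s ≤ a 0 + ∑ s ∈ Finset.range k, e s := by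
  have htel : ∀ n, ∑ s ∈ Finset.range n, c s + a n ≤ a 0 + ∑ s ∈ Finset.range n, e s := by
    intro n
    induction n with
    | zero => simp
    | succ n ih =>
      rw [Finset.sum_range_succ, Finset.sum_range_succ]
      linarith [h n]
  linarith [htel k, ha k]

def tolledPotential {E F : Type*} [NormedAddCommGroup E] [NormedSpace ℝ E]
    [NormedAddCommGroup F] [InnerProductSpace ℝ F] (F₀ : E → ℝ) (A : E →L[ℝ] F) (b : F)
    (y : E) (τ : F) : ℝ :=
  F₀ y + ⟪τ, A y - b⟫

section TolledPotential

variable {E F : Type*} [NormedAddCommGroup E] [NormedSpace ℝ E]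
  [NormedAddCommGroup F] [InnerProductSpace ℝ F] {F₀ : E → ℝ} {A : E →L[ℝ] F} {b : F}

lemma inner_sub_map_sub_eq_tolledPotential (y z : E) (τ σ : F) :
    ⟪τ - σ, A (y - z)⟫ = (tolledPotential F₀ A b y τ - tolledPotential F₀ A b z τ)
      - (tolledPotential F₀ A b y σ - tolledPotential F₀ A b z σ) := by
  simp only [tolledPotential, map_sub, inner_sub_left, inner_sub_right]
  ring

lemma StrongConvexOn.tolledPotential {Y : Set E} {α : ℝ} (hF₀ : StrongConvexOn Y α F₀) (τ : F) :
    StrongConvexOn Y α (tolledPotential F₀ A b · τ) := by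
  have hlin : ConvexOn ℝ Y fun y => ⟪τ, A y⟫ - ⟪τ, b⟫ :=
    (((innerₛₗ ℝ τ).comp A.toLinearMap).convexOn hF₀.1).add_const _
  convert hF₀.add_convexOn hlin using 1
  ext y
  simp [_root_.tolledPotential, inner_sub_right]

end TolledPotential

section TollUpdate

variable {E κ : Type*} [NormedAddCommGroup E] [NormedSpace ℝ E] [Fintype κ] {F₀ : E → ℝ}
  {A : E →L[ℝ] EuclideanSpace ℝ κ} {b : EuclideanSpace ℝ κ}

lemma sq_norm_sub_add_le_of_tollUpdate {Y : Set E} {α γ ε : ℝ} {y ystar : E}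
    {τ τ' τstar : EuclideanSpace ℝ κ} (hF₀ : StrongConvexOn Y α F₀) (hγ : 0 ≤ γ)
    (hstep : 2 * γ * ‖A‖ ^ 2 ≤ α) (hy : y ∈ Y)
    (hyε : ∀ x ∈ Y, tolledPotential F₀ A b y τ ≤ tolledPotential F₀ A b x τ + ε)
    (hτ' : ∀ i, τ' i = max (τ i + γ * (A y - b) i) 0) (hystar : ystar ∈ Y)
    (hfeas : ∀ i, (A ystar - b) i ≤ 0) (hτstar : ∀ i, 0 ≤ τstar i)
    (hcompl : ⟪τstar, A ystar - b⟫ = 0) :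
    2 * γ * (tolledPotential F₀ A b y τstar - tolledPotential F₀ A b ystar τstar)
      + ‖τ' - τstar‖ ^ 2 ≤ ‖τ - τstar‖ ^ 2 + 4 * γ * ε := by
  have hproj : ‖τ' - τstar‖ ^ 2 ≤ ‖(τ - τstar) + γ • A (y - ystar)‖ ^ 2 := by
    have h := EuclideanSpace.sq_norm_sub_le_of_forall_eq_max_zero (p := τ') (v := τ + γ • (A y - b))
      (w := γ • (b - A ystar)) (fun i => by simp [hτ']) hτstar
      (fun i => by simpa using mul_nonneg hγ (sub_nonneg.2 (sub_nonpos.1 (by simpa using hfeas i))))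
    have hw : ⟪τstar, γ • (b - A ystar)⟫ = 0 := by
      rw [inner_smul_right, ← neg_sub, inner_neg_right, hcompl, neg_zero, mul_zero]
    have hv : τ + γ • (A y - b) + γ • (b - A ystar) - τstar = (τ - τstar) + γ • A (y - ystar) := by
      rw [map_sub]; module
    rwa [hw, mul_zero, add_zero, hv] at h
  have hexpand : ‖(τ - τstar) + γ • A (y - ystar)‖ ^ 2 = ‖τ - τstar‖ ^ 2
      + 2 * γ * ⟪τ - τstar, A (y - ystar)⟫ + γ ^ 2 * ‖A (y - ystar)‖ ^ 2 := by
    rw [norm_add_sq_real, inner_smul_right, norm_smul, mul_pow, Real.norm_eq_abs, sq_abs]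
    ring
  have hcross := inner_sub_map_sub_eq_tolledPotential (F₀ := F₀) (A := A) (b := b) y ystar τ τstar
  have happrox := (hF₀.tolledPotential τ).sq_norm_sub_le_of_forall_le_add hy hystar hyε
  have hA : ‖A (y - ystar)‖ ^ 2 ≤ ‖A‖ ^ 2 * ‖y - ystar‖ ^ 2 := by
    rw [← mul_pow]; exact pow_le_pow_left₀ (norm_nonneg _) (A.le_opNorm _) 2
  have hγA : γ ^ 2 * ‖A (y - ystar)‖ ^ 2 ≤ γ * (α / 2) * ‖y - ystar‖ ^ 2 := by
    calc γ ^ 2 * ‖A (y - ystar)‖ ^ 2 ≤ γ ^ 2 * (‖A‖ ^ 2 * ‖y - ystar‖ ^ 2) := by gcongr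
      _ = γ / 2 * (2 * γ * ‖A‖ ^ 2) * ‖y - ystar‖ ^ 2 := by ring
      _ ≤ γ / 2 * α * ‖y - ystar‖ ^ 2 := by gcongr
      _ = γ * (α / 2) * ‖y - ystar‖ ^ 2 := by ring
  nlinarith [mul_le_mul_of_nonneg_left happrox hγ]

end TollUpdate

theorem stmt_14_general
    {ι κ : Type*} [Fintype ι] [Fintype κ]
    (Y : Set (EuclideanSpace ℝ ι)) (hYcpt : IsCompact Y)
    (α : ℝ) (hα : 0 < α)
    (F₀ : EuclideanSpace ℝ ι → ℝ) (hF₀cont : Continuous F₀)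
    (hF₀sc : StrongConvexOn Y α F₀)
    (A : EuclideanSpace ℝ ι →L[ℝ] EuclideanSpace ℝ κ) (b : EuclideanSpace ℝ κ)
    (L : EuclideanSpace ℝ ι → EuclideanSpace ℝ κ → ℝ)
    (hL : ∀ y τ, L y τ = F₀ y + ⟪τ, A y - b⟫)
    (d : EuclideanSpace ℝ κ → ℝ)
    (hd : ∀ τ, d τ = sInf ((fun y => L y τ) '' Y))
    (γ : ℝ) (hγ : 0 < γ)
    (τs : ℕ → EuclideanSpace ℝ κ) (ys : ℕ → EuclideanSpace ℝ ι) (εs : ℕ → ℝ)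
    (hysY : ∀ s, ys s ∈ Y)
    (hyseq : ∀ s, L (ys s) (τs s) ≤ d (τs s) + εs s)
    (hupdate : ∀ s i, τs (s + 1) i = max (τs s i + γ * (A (ys s) - b) i) 0)
    (τstar : EuclideanSpace ℝ κ) (hτstarpos : ∀ i, 0 ≤ τstar i)
    (ystar : EuclideanSpace ℝ ι) (hystarY : ystar ∈ Y)
    (hystarL : L ystar τstar = d τstar)
    (hystarfeas : ∀ i, (A ystar - b) i ≤ 0)
    (hcompl : ⟪τstar, A ystar - b⟫ = 0)
    (hstep : 2 * γ * ‖A‖ ^ 2 ≤ α)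
    :
    ∀ k : ℕ, 1 ≤ k →
      ‖((k : ℝ)⁻¹ • ∑ s ∈ Finset.range k, ys s) - ystar‖ ^ 2 ≤
        2 / (α * γ * k) *
          ((1 / 2 * ‖τs 0‖ ^ 2 + 2 * γ * ∑ s ∈ Finset.range k, εs s) +
           (‖τstar‖ ^ 2 + ‖τstar‖ * ‖τs 0 - τstar‖ +
             2 * ‖τstar‖ * Real.sqrt (γ * ∑ s ∈ Finset.range k, εs s))) := by
  obtain rfl : L = tolledPotential F₀ A b := funext fun y => funext fun τ => hL y τ
  intro k hk
  have hdual_le : ∀ τ, ∀ x ∈ Y, d τ ≤ tolledPotential F₀ A b x τ := fun τ x hx => by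
    have hcont : Continuous (tolledPotential F₀ A b · τ) :=
      hF₀cont.add (continuous_const.inner (A.continuous.sub continuous_const))
    rw [hd]
    exact csInf_le (hYcpt.image hcont).bddBelow (Set.mem_image_of_mem _ hx)
  have hstar_min : IsMinOn (tolledPotential F₀ A b · τstar) Y ystar := fun x hx => by
    simpa only [Set.mem_ofPred_eq, hystarL] using hdual_le τstar x hx
  have hdescent := fun s => sq_norm_sub_add_le_of_tollUpdate hF₀sc hγ.le hstep (hysY s)
    (fun x hx => (hyseq s).trans (add_le_add_left (hdual_le _ x hx) _)) (hupdate s)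
    hystarY hystarfeas hτstarpos hcompl
  have hsum := sum_range_le_of_add_succ_le hdescent (fun n => sq_nonneg ‖τs n - τstar‖) k
  have havg := (hF₀sc.tolledPotential τstar).sq_norm_average_sub_le hα.le hystarY hstar_min
    (fun s _ => hysY s) ⟨0, Finset.mem_range.2 hk⟩
  rw [Finset.card_range] at havg
  rw [← Finset.mul_sum, ← Finset.mul_sum] at hsum
  have hinit := sq_norm_sub_add_sq_norm_le (τs 0) τstar
  have hk0 : (0 : ℝ) < k := by exact_mod_cast hk
  have hsqrt := Real.sqrt_nonneg (γ * ∑ s ∈ Finset.range k, εs s)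
  set S := ∑ s ∈ Finset.range k,
    (tolledPotential F₀ A b (ys s) τstar - tolledPotential F₀ A b ystar τstar)
  have hscaled : 2 * γ * k * (α / 2 * ‖(k : ℝ)⁻¹ • ∑ s ∈ Finset.range k, ys s - ystar‖ ^ 2)
      ≤ 2 * γ * S :=
    calc _ ≤ 2 * γ * k * ((k : ℝ)⁻¹ * S) := mul_le_mul_of_nonneg_left havg (by positivity)
      _ = 2 * γ * S := by field_simp
  rw [div_mul_eq_mul_div, le_div_iff₀ (by positivity)]
  linarith [mul_nonneg (norm_nonneg τstar) hsqrt, sq_nonneg ‖τstar‖]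

theorem stmt_14
    {ι κ : Type*} [Fintype ι] [Fintype κ] [Nonempty ι] [Nonempty κ]
    (Y : Set (EuclideanSpace ℝ ι)) (hYne : Y.Nonempty) (hYcpt : IsCompact Y)
    (hYconv : Convex ℝ Y)
    (α : ℝ) (hα : 0 < α)
    (F₀ : EuclideanSpace ℝ ι → ℝ) (hF₀cont : Continuous F₀)
    (hF₀sc : StrongConvexOn Y α F₀)
    (A : EuclideanSpace ℝ ι →L[ℝ] EuclideanSpace ℝ κ) (b : EuclideanSpace ℝ κ)
    (L : EuclideanSpace ℝ ι → EuclideanSpace ℝ κ → ℝ)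
    (hL : ∀ y τ, L y τ = F₀ y + ⟪τ, A y - b⟫)
    (d : EuclideanSpace ℝ κ → ℝ)
    (hd : ∀ τ, d τ = sInf ((fun y => L y τ) '' Y))
    (γ : ℝ) (hγ : 0 < γ)
    (τs : ℕ → EuclideanSpace ℝ κ) (ys : ℕ → EuclideanSpace ℝ ι) (εs : ℕ → ℝ)
    (hτ0 : ∀ i, 0 ≤ τs 0 i)
    (hεs : ∀ s, 0 ≤ εs s)
    (hysY : ∀ s, ys s ∈ Y)
    (hyseq : ∀ s, L (ys s) (τs s) ≤ d (τs s) + εs s)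
    (hupdate : ∀ s i, τs (s + 1) i = max (τs s i + γ * (A (ys s) - b) i) 0)
    (τstar : EuclideanSpace ℝ κ) (hτstarpos : ∀ i, 0 ≤ τstar i)
    (hτstarmax : ∀ σ : EuclideanSpace ℝ κ, (∀ i, 0 ≤ σ i) → d σ ≤ d τstar)
    (ystar : EuclideanSpace ℝ ι) (hystarY : ystar ∈ Y)
    (hystarL : L ystar τstar = d τstar)
    (hystarfeas : ∀ i, (A ystar - b) i ≤ 0)
    (hcompl : ⟪τstar, A ystar - b⟫ = 0)
    (hstep : 2 * γ * ‖A‖ ^ 2 ≤ α)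
    :
    ∀ k : ℕ, 1 ≤ k →
      ‖((k : ℝ)⁻¹ • ∑ s ∈ Finset.range k, ys s) - ystar‖ ^ 2 ≤
        2 / (α * γ * k) *
          ((1 / 2 * ‖τs 0‖ ^ 2 + 2 * γ * ∑ s ∈ Finset.range k, εs s) +
           (‖τstar‖ ^ 2 + ‖τstar‖ * ‖τs 0 - τstar‖ +
             2 * ‖τstar‖ * Real.sqrt (γ * ∑ s ∈ Finset.range k, εs s))) :=
  stmt_14_general Y hYcpt α hα F₀ hF₀cont hF₀sc A b L hL d hd γ hγ τs ys εs hysY hyseq hupdate τstar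
    hτstarpos ystar hystarY hystarL hystarfeas hcompl hstep
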